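/- Let e ≥ 2 and let λ = (l₁^{k₁}, l₂^{k₂}, …, l_s^{k_s}) be an e-restricted partition of d (part l_i repeated k_i ≥ 1 times) with l₁ = e and l₁ > l₂ > ⋯ > l_s ≥ 1. Then in ℤ[q,q^{−1}], the sum of q^{deg(T)} over all standard λ-tableaux T with residue sequence i^T equal to the ladder weight j^λ is equal to (q + q^{−1})^{k₁}. -/
import Mathlib


namespace KN

/-- A subset of `ℤ²_{≥1}` (encoded in `ℕ × ℕ`) shaped like a Young diagram:
all coordinates are `≥ 1` and the set is closed under decreasing either coordinate
(staying `≥ 1`). -/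
def IsDiagram (S : Set (ℕ × ℕ)) : Prop :=
  (∀ p ∈ S, 1 ≤ p.1 ∧ 1 ≤ p.2) ∧
  ∀ a b a' b', (a, b) ∈ S → 1 ≤ a' → a' ≤ a → 1 ≤ b' → b' ≤ b → (a', b') ∈ S

/-- The Young diagram of a partition given as a function `l : ℕ → ℕ`
(`l r` is the `r`-th part, for `r ≥ 1`): the nodes `(a, b)` with `a, b ≥ 1`, `b ≤ l a`. -/
def cells (l : ℕ → ℕ) : Set (ℕ × ℕ) := {p | 1 ≤ p.1 ∧ 1 ≤ p.2 ∧ p.2 ≤ l p.1}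

/-- `l` (indexed from `1`) is a weakly decreasing sequence of naturals, eventually zero. -/
def IsPartitionFun (l : ℕ → ℕ) : Prop :=
  (∀ r, 1 ≤ r → l (r + 1) ≤ l r) ∧ ∃ N, ∀ r, N ≤ r → l r = 0

/-- `l` is a partition of `d`: its Young diagram has exactly `d` nodes. -/
def IsPartitionOf (l : ℕ → ℕ) (d : ℕ) : Prop :=
  IsPartitionFun l ∧ (cells l).Finite ∧ (cells l).ncard = d

/-- `λ_r - λ_{r+1} < e` for all `r ≥ 1`. -/
def IsRestricted (e : ℕ) (l : ℕ → ℕ) : Prop := ∀ r, 1 ≤ r → l r < l (r + 1) + e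

/-- The `m`-th ladder `L_m = {(1 + k, m - k(e-1)) : k ≥ 0, k(e-1) < m}`. -/
def ladder (e m : ℕ) : Set (ℕ × ℕ) :=
  {p | ∃ k : ℕ, k * (e - 1) < m ∧ p = (1 + k, m - k * (e - 1))}

/-- The residue `b - a (mod e)` of a node `(a, b)`. -/
def res (e : ℕ) (p : ℕ × ℕ) : ZMod e := (p.2 : ZMod e) - (p.1 : ZMod e)

/-- `A` is a removable node of the diagram `S`. -/
def Removable (S : Set (ℕ × ℕ)) (A : ℕ × ℕ) : Prop := A ∈ S ∧ IsDiagram (S \ {A})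

/-- `B` is an addable node of the diagram `S`. -/
def Addable (S : Set (ℕ × ℕ)) (B : ℕ × ℕ) : Prop := B ∉ S ∧ IsDiagram (S ∪ {B})

/-- `σ_k` of a diagram: the number of nodes in rows `1, …, k`. -/
noncomputable def sigmaSet (S : Set (ℕ × ℕ)) (k : ℕ) : ℕ := (S ∩ {p | p.1 ≤ k}).ncard

/-- Dominance order on diagrams: `S ⊴ T` iff `σ_k(S) ≤ σ_k(T)` for all `k`. -/
def DomLE (S T : Set (ℕ × ℕ)) : Prop := ∀ k, sigmaSet S k ≤ sigmaSet T k

/-- `R_m = r_1(λ) + ⋯ + r_m(λ)` where `r_u(λ) = |λ ∩ L_u|`. -/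
noncomputable def Rlad (e : ℕ) (l : ℕ → ℕ) (m : ℕ) : ℕ :=
  ∑ u ∈ Finset.Icc 1 m, (cells l ∩ ladder e u).ncard

/-- The `s`-th entry of the ladder weight `j^λ`: it equals `m - 1 (mod e)` for the
unique `m` with `R_{m-1} < s ≤ R_m`. -/
noncomputable def ladderWeight (e : ℕ) (l : ℕ → ℕ) (s : ℕ) : ZMod e :=
  ((sInf {m : ℕ | s ≤ Rlad e l m} - 1 : ℕ) : ZMod e)

/-- A standard tableau of shape `S` (with `|S| = d`): a bijective labelling of the
nodes of `S` by `1, …, d`, increasing along rows and columns. -/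
def IsStandardTableau (S : Set (ℕ × ℕ)) (d : ℕ) (T : ℕ × ℕ → ℕ) : Prop :=
  (∀ p ∈ S, 1 ≤ T p ∧ T p ≤ d) ∧
  (∀ p ∈ S, ∀ q ∈ S, T p = T q → p = q) ∧
  (∀ s, 1 ≤ s → s ≤ d → ∃ p ∈ S, T p = s) ∧
  (∀ a b, (a, b) ∈ S → (a, b + 1) ∈ S → T (a, b) < T (a, b + 1)) ∧
  (∀ a b, (a, b) ∈ S → (a + 1, b) ∈ S → T (a, b) < T (a + 1, b))

/-- The degree `d_A(S)` of a removable node `A` of `S`: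
(number of addable nodes of `S` of the same residue strictly below `A`) minus
(number of removable nodes of `S` of the same residue strictly below `A`). -/
noncomputable def degNode (e : ℕ) (S : Set (ℕ × ℕ)) (A : ℕ × ℕ) : ℤ :=
  (({B | Addable S B ∧ res e B = res e A ∧ A.1 < B.1}).ncard : ℤ) -
  (({B | Removable S B ∧ res e B = res e A ∧ A.1 < B.1}).ncard : ℤ)

/-- The degree of a standard tableau: `deg(T) = Σ_{s=1}^d d_{A_s}(sh(T_{≤ s}))`,
written as a sum over the nodes `p` of `S` (with `s = T p`). -/
noncomputable def degTab (e : ℕ) (S : Set (ℕ × ℕ)) (T : ℕ × ℕ → ℕ) : ℤ :=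
  ∑ᶠ p ∈ S, degNode e {q | q ∈ S ∧ T q ≤ T p} p

/-- The set of standard tableaux of shape `S` (of size `d`) whose residue sequence
equals the ladder weight `j^λ` of the partition `l`; tableaux are normalized to
take the value `0` off `S`. -/
def LWTableaux (e d : ℕ) (l : ℕ → ℕ) (S : Set (ℕ × ℕ)) : Set ((ℕ × ℕ) → ℕ) :=
  {T | IsStandardTableau S d T ∧ (∀ p, p ∉ S → T p = 0) ∧
    ∀ p ∈ S, res e p = ladderWeight e l (T p)}

/-- The quantum integer `[n]_q = q^{n-1} + q^{n-3} + ⋯ + q^{1-n} ∈ ℤ[q, q⁻¹]`. -/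
noncomputable def qint (n : ℕ) : LaurentPolynomial ℤ :=
  ∑ k ∈ Finset.range n, LaurentPolynomial.T ((n : ℤ) - 1 - 2 * k)

/-- The quantum factorial `[n]_q! = [n]_q [n-1]_q ⋯ [1]_q`. -/
noncomputable def qfact (n : ℕ) : LaurentPolynomial ℤ :=
  ∏ k ∈ Finset.Icc 1 n, qint k

/-- ladder index -/
def idxP (e : ℕ) (p : ℕ × ℕ) : ℕ := p.2 + (p.1 - 1) * (e - 1)

/-- context: what we need of the partition -/
structure Ctx (e : ℕ) (l : ℕ → ℕ) (N1 : ℕ) : Prop where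
  he : 2 ≤ e
  mono : ∀ r, 1 ≤ r → l (r + 1) ≤ l r
  fin : (cells l).Finite
  eqe : ∀ r, 1 ≤ r → r ≤ N1 → l r = e
  lte : ∀ r, N1 < r → l r < e
  hN1 : 1 ≤ N1
  pos : 1 ≤ l (N1 + 1)

variable {e : ℕ} {l : ℕ → ℕ} {N1 : ℕ}

lemma Ctx.mono' (hC : Ctx e l N1) {r r' : ℕ} (h1 : 1 ≤ r) (h : r ≤ r') : l r' ≤ l r := by
  induction r', h using Nat.le_induction with
  | base => exact le_rfl
  | succ n hn ih => exact le_trans (hC.mono n (le_trans h1 hn)) ih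

lemma Ctx.le_e (hC : Ctx e l N1) {r : ℕ} (h1 : 1 ≤ r) : l r ≤ e := by
  rcases le_or_gt r N1 with h | h
  · exact le_of_eq (hC.eqe r h1 h)
  · exact le_of_lt (hC.lte r h)

lemma mem_cells {p : ℕ × ℕ} : p ∈ cells l ↔ 1 ≤ p.1 ∧ 1 ≤ p.2 ∧ p.2 ≤ l p.1 := Iff.rfl

lemma Ctx.cells_closed (hC : Ctx e l N1) {a b a' b' : ℕ} (h : (a, b) ∈ cells l)
    (h1 : 1 ≤ a') (h2 : a' ≤ a) (h3 : 1 ≤ b') (h4 : b' ≤ b) : (a', b') ∈ cells l := by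
  obtain ⟨ha, hb, hle⟩ := h
  exact ⟨h1, h3, le_trans (le_trans h4 hle) (hC.mono' h1 h2)⟩

lemma Ctx.cells_diagram (hC : Ctx e l N1) : IsDiagram (cells l) :=
  ⟨fun p hp => ⟨hp.1, hp.2.1⟩, fun _ _ _ _ h h1 h2 h3 h4 => hC.cells_closed h h1 h2 h3 h4⟩

/-- key arithmetic: two nodes in the same ladder, one strictly below the other -/
lemma idx_eq_arith (he : 2 ≤ e) {a b c d' : ℕ} (ha : 1 ≤ a) (hbe : b ≤ e) (hd : 1 ≤ d')
    (hlt : a < c) (heq : d' + (c - 1) * (e - 1) = b + (a - 1) * (e - 1)) :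
    b = e ∧ c = a + 1 ∧ d' = 1 := by
  have hsplit : (c - 1) = (a - 1) + (c - a) := by omega
  rw [hsplit, Nat.add_mul] at heq
  have heq2 : d' + (c - a) * (e - 1) = b := by omega
  have h1 : c - a = 1 ∨ 2 ≤ c - a := by omega
  have h2 : 2 ≤ c - a → 2 * (e - 1) ≤ (c - a) * (e - 1) := fun h => Nat.mul_le_mul_right _ h
  have h3 : c - a = 1 → (c - a) * (e - 1) = e - 1 := by intro h; rw [h, one_mul]
  rcases h1 with h | h
  · have := h3 h; omega
  · have := h2 h; omega

lemma idx_gap (he : 2 ≤ e) {a b c d' : ℕ} (ha : 1 ≤ a) (hbe : b ≤ e) (hd : 1 ≤ d')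
    (hlt : a < c) :
    b + (a - 1) * (e - 1) < d' + (c - 1) * (e - 1) + e := by
  have hsplit : (c - 1) = (a - 1) + (c - a) := by omega
  rw [hsplit, Nat.add_mul]
  have h2 : 1 * (e - 1) ≤ (c - a) * (e - 1) := Nat.mul_le_mul_right _ (by omega)
  omega

/-- a node weakly right-below (a+1,1), other than it, has strictly bigger index
    than (a,e) -/
lemma idx_above_arith (he : 2 ≤ e) {a α β : ℕ} (ha : 1 ≤ a) (hα : a + 1 ≤ α) (hβ : 1 ≤ β)
    (hne : ¬(α = a + 1 ∧ β = 1)) :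
    e + (a - 1) * (e - 1) < β + (α - 1) * (e - 1) := by
  have hsplit : (α - 1) = (a - 1) + (α - a) := by omega
  rw [hsplit, Nat.add_mul]
  have h1 : α - a = 1 ∨ 2 ≤ α - a := by omega
  rcases h1 with h | h
  · have : (α - a) * (e - 1) = e - 1 := by rw [h, one_mul]
    have hβ2 : 2 ≤ β := by omega
    omega
  · have : 2 * (e - 1) ≤ (α - a) * (e - 1) := Nat.mul_le_mul_right _ h
    omega

lemma idx_mono_row (he : 2 ≤ e) {a' a : ℕ} (h1 : 1 ≤ a') (h2 : a' ≤ a) :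
    1 + (a' - 1) * (e - 1) ≤ 1 + (a - 1) * (e - 1) := by
  have : (a' - 1) * (e - 1) ≤ (a - 1) * (e - 1) := Nat.mul_le_mul_right _ (by omega)
  omega

lemma res_eq_idx (he : 2 ≤ e) {p : ℕ × ℕ} (h1 : 1 ≤ p.1) (h2 : 1 ≤ p.2) :
    res e p = ((idxP e p - 1 : ℕ) : ZMod e) := by
  have h : idxP e p - 1 = (p.2 - 1) + (p.1 - 1) * (e - 1) := by unfold idxP; omega
  rw [h]
  push_cast [Nat.cast_sub h2, Nat.cast_sub h1, Nat.cast_sub (by omega : 1 ≤ e)]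
  rw [res]
  have : ((e : ZMod e)) = 0 := ZMod.natCast_self e
  rw [this]
  ring

lemma res_modeq (he : 2 ≤ e) {p q : ℕ × ℕ} (hp1 : 1 ≤ p.1) (hp2 : 1 ≤ p.2)
    (hq1 : 1 ≤ q.1) (hq2 : 1 ≤ q.2) (hres : res e q = res e p) :
    idxP e q ≡ idxP e p [MOD e] := by
  rw [res_eq_idx he hq1 hq2, res_eq_idx he hp1 hp2, ZMod.natCast_eq_natCast_iff'] at hres
  have hres' : idxP e q - 1 ≡ idxP e p - 1 [MOD e] := hres
  have h2 := Nat.ModEq.add_right 1 hres'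
  have e1 : idxP e q - 1 + 1 = idxP e q := by unfold idxP; omega
  have e2 : idxP e p - 1 + 1 = idxP e p := by unfold idxP; omega
  rwa [e1, e2] at h2

lemma modeq_cases {x y : ℕ} (h : x ≡ y [MOD e]) (hle : x ≤ y) : y = x ∨ x + e ≤ y := by
  have hd := (Nat.modEq_iff_dvd' hle).mp h
  obtain ⟨k, hk⟩ := hd
  rcases Nat.eq_zero_or_pos k with h0 | h0
  · left; rw [h0, mul_zero] at hk; omega
  · right; have : e * 1 ≤ e * k := Nat.mul_le_mul_left _ h0; omega

lemma mem_ladder_iff {m : ℕ} {p : ℕ × ℕ} (h1 : 1 ≤ p.1) (h2 : 1 ≤ p.2) :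
    p ∈ ladder e m ↔ idxP e p = m := by
  constructor
  · rintro ⟨k, hk, hp⟩
    rw [hp]
    show (m - k * (e - 1)) + (1 + k - 1) * (e - 1) = m
    have h' : 1 + k - 1 = k := by omega
    rw [h']
    omega
  · intro h
    refine ⟨p.1 - 1, ?_, ?_⟩
    · unfold idxP at h; omega
    · unfold idxP at h
      ext
      · simp; omega
      · simp; omega

lemma cells_inter_ladder (m : ℕ) :
    cells l ∩ ladder e m = cells l ∩ {p | idxP e p = m} := by
  ext p
  simp only [Set.mem_inter_iff, Set.mem_setOf_eq, and_congr_right_iff]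
  intro hp
  exact mem_ladder_iff hp.1 hp.2.1

/-! ### Rlad lemmas -/

lemma Ctx.fin_sub (hC : Ctx e l N1) (X : Set (ℕ × ℕ)) : (cells l ∩ X).Finite :=
  hC.fin.subset Set.inter_subset_left

lemma Ctx.Rlad_eq (hC : Ctx e l N1) (m : ℕ) :
    Rlad e l m = (cells l ∩ {p | idxP e p ≤ m}).ncard := by
  induction m with
  | zero =>
    have h1 : cells l ∩ {p | idxP e p ≤ 0} = ∅ := by
      ext p
      simp only [Set.mem_inter_iff, Set.mem_setOf_eq, Set.mem_empty_iff_false, iff_false]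
      rintro ⟨hp, hidx⟩
      have := hp.2.1
      unfold idxP at hidx
      omega
    rw [Rlad, h1]
    simp
  | succ m ih =>
    rw [Rlad, Finset.sum_Icc_succ_top (by omega)]
    rw [← Rlad, ih, cells_inter_ladder]
    have hsplit : cells l ∩ {p | idxP e p ≤ m + 1} =
        (cells l ∩ {p | idxP e p ≤ m}) ∪ (cells l ∩ {p | idxP e p = m + 1}) := by
      ext p
      simp only [Set.mem_inter_iff, Set.mem_setOf_eq, Set.mem_union]
      constructor
      · rintro ⟨hp, h⟩
        rcases Nat.lt_or_ge (idxP e p) (m+1) with h' | h'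
        · exact Or.inl ⟨hp, by omega⟩
        · exact Or.inr ⟨hp, by omega⟩
      · rintro (⟨hp, h⟩ | ⟨hp, h⟩) <;> exact ⟨hp, by omega⟩
    rw [hsplit, Set.ncard_union_eq ?_ (hC.fin_sub _) (hC.fin_sub _)]
    · rw [Set.disjoint_left]
      rintro p ⟨_, h1⟩ ⟨_, h2⟩
      simp only [Set.mem_setOf_eq] at h1 h2
      omega

lemma Ctx.Rlad_mono (hC : Ctx e l N1) {m m' : ℕ} (h : m ≤ m') : Rlad e l m ≤ Rlad e l m' := by
  rw [hC.Rlad_eq, hC.Rlad_eq]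
  exact Set.ncard_le_ncard (fun p hp => ⟨hp.1, le_trans hp.2 h⟩) (hC.fin_sub _)

lemma Ctx.Rlad_le (hC : Ctx e l N1) (m : ℕ) : Rlad e l m ≤ (cells l).ncard := by
  rw [hC.Rlad_eq]
  exact Set.ncard_le_ncard Set.inter_subset_left hC.fin

lemma Ctx.Rlad_zero (hC : Ctx e l N1) : Rlad e l 0 = 0 := by
  rw [Rlad]; simp

lemma Ctx.exists_Rlad_top (hC : Ctx e l N1) : ∃ M0, ∀ m, M0 ≤ m → Rlad e l m = (cells l).ncard := by
  obtain ⟨M0, hM0⟩ := (hC.fin.image (idxP e)).bddAbove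
  refine ⟨M0, fun m hm => ?_⟩
  rw [hC.Rlad_eq]
  congr 1
  rw [Set.inter_eq_left]
  intro p hp
  have : idxP e p ≤ M0 := hM0 (Set.mem_image_of_mem _ hp)
  exact le_trans this hm

lemma Ctx.Rlad_succ (hC : Ctx e l N1) (m : ℕ) :
    Rlad e l (m + 1) = Rlad e l m + (cells l ∩ {p | idxP e p = m + 1}).ncard := by
  rw [Rlad, Finset.sum_Icc_succ_top (by omega), ← Rlad, cells_inter_ladder]

/-! ### ladder classification -/

lemma Ctx.pair_lower_mem (hC : Ctx e l N1) {a : ℕ} (h : 1 ≤ a) (hla : l a = e) :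
    (a + 1, 1) ∈ cells l := by
  have haN : a ≤ N1 := by
    by_contra h'
    exact absurd hla (ne_of_lt (hC.lte a (by omega)))
  refine ⟨by omega, le_rfl, ?_⟩
  calc 1 ≤ l (N1 + 1) := hC.pos
    _ ≤ l (a + 1) := hC.mono' (by omega) (by omega)

lemma idx_pair_eq (he : 2 ≤ e) {a : ℕ} (h : 1 ≤ a) :
    idxP e (a + 1, 1) = idxP e (a, e) := by
  unfold idxP
  simp only
  have h' : (a + 1 - 1) * (e - 1) = (a - 1) * (e - 1) + (e - 1) := by
    have : a + 1 - 1 = (a - 1) + 1 := by omega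
    rw [this, Nat.add_mul, one_mul]
  omega

lemma Ctx.le_e_of_mem (hC : Ctx e l N1) {p : ℕ × ℕ} (hp : p ∈ cells l) : p.2 ≤ e :=
  le_trans hp.2.2 (hC.le_e hp.1)

lemma idx_col_succ {a : ℕ} (h : 1 ≤ a) : idxP e (a + 1, 1) = idxP e (a, 1) + (e - 1) := by
  unfold idxP
  simp only
  have hx : (a + 1 - 1) * (e - 1) = (a - 1) * (e - 1) + (e - 1) := by
    rw [show a + 1 - 1 = (a - 1) + 1 by omega, Nat.add_mul, one_mul]
  omega

lemma idx_same_row {q u : ℕ × ℕ} (h1 : q.1 = u.1) (h : idxP e q = idxP e u) : q.2 = u.2 := by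
  unfold idxP at h; rw [h1] at h; omega

/-- upper node of a pair : the full ladder-level set -/
lemma Ctx.ladder_set_upper (hC : Ctx e l N1) {p : ℕ × ℕ} (hp : p ∈ cells l) (hb : p.2 = e) :
    cells l ∩ {q | idxP e q = idxP e p} = {p, (p.1 + 1, 1)} := by
  have hle : l p.1 = e := le_antisymm (hC.le_e hp.1) (hb ▸ hp.2.2)
  ext q
  simp only [Set.mem_inter_iff, Set.mem_setOf_eq, Set.mem_insert_iff, Set.mem_singleton_iff]
  constructor
  · rintro ⟨hq, hidx⟩
    rcases Nat.lt_trichotomy q.1 p.1 with h | h | h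
    · exfalso
      have hee := hC.he
      obtain ⟨h1', h2', h3'⟩ := idx_eq_arith hC.he hq.1 (hC.le_e_of_mem hq) hp.2.1 h hidx.symm
      omega
    · left
      have : q.2 = p.2 := by unfold idxP at hidx; rw [h] at hidx; omega
      exact Prod.ext h this
    · right
      have harith := idx_eq_arith hC.he hp.1 (hC.le_e_of_mem hp) hq.2.1 h hidx
      exact Prod.ext harith.2.1 harith.2.2
  · rintro (rfl | rfl)
    · exact ⟨hp, rfl⟩
    · refine ⟨hC.pair_lower_mem hp.1 hle, ?_⟩
      show idxP e (p.1 + 1, 1) = idxP e p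
      have : p = (p.1, e) := Prod.ext rfl hb
      rw [this]
      exact idx_pair_eq hC.he hp.1

lemma Ctx.ladder_set_lower (hC : Ctx e l N1) {p : ℕ × ℕ} (hp : p ∈ cells l) (hb : p.2 = 1)
    (h2 : 2 ≤ p.1) (hl : l (p.1 - 1) = e) :
    cells l ∩ {q | idxP e q = idxP e p} = {(p.1 - 1, e), p} := by
  have hee := hC.he
  have hU : (p.1 - 1, e) ∈ cells l := ⟨by simp; omega, by simp; omega, by simp [hl]⟩
  have hidxU : idxP e (p.1 - 1, e) = idxP e p := by
    have h' : p = (p.1 - 1 + 1, 1) := Prod.ext (by simp; omega) hb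
    rw [h']
    exact (idx_pair_eq hC.he (by omega)).symm
  ext q
  simp only [Set.mem_inter_iff, Set.mem_setOf_eq, Set.mem_insert_iff, Set.mem_singleton_iff]
  constructor
  · rintro ⟨hq, hidx⟩
    rcases Nat.lt_trichotomy q.1 p.1 with h | h | h
    · left
      obtain ⟨h1', h2', h3'⟩ := idx_eq_arith hC.he hq.1 (hC.le_e_of_mem hq) hp.2.1 h hidx.symm
      have hq1 : q.1 = p.1 - 1 := by omega
      have hq2 : q.2 = e := by
        have hx := idx_same_row (q := q) (u := (p.1 - 1, e)) (by simpa using hq1)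
          (by rw [hidx]; exact hidxU.symm)
        simpa using hx
      exact Prod.ext hq1 hq2
    · right
      have : q.2 = p.2 := by unfold idxP at hidx; rw [h] at hidx; omega
      exact Prod.ext h this
    · exfalso
      obtain ⟨h1', h2', h3'⟩ := idx_eq_arith hC.he hp.1 (hC.le_e_of_mem hp) hq.2.1 h hidx
      have hee := hC.he
      omega
  · rintro (rfl | rfl)
    · exact ⟨hU, hidxU⟩
    · exact ⟨hp, rfl⟩

lemma Ctx.ladder_set_single (hC : Ctx e l N1) {p : ℕ × ℕ} (hp : p ∈ cells l)
    (h : ¬(p.2 = e ∨ (p.2 = 1 ∧ 2 ≤ p.1 ∧ l (p.1 - 1) = e))) :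
    cells l ∩ {q | idxP e q = idxP e p} = {p} := by
  push_neg at h
  obtain ⟨hne, hnl⟩ := h
  ext q
  simp only [Set.mem_inter_iff, Set.mem_setOf_eq, Set.mem_singleton_iff]
  constructor
  · rintro ⟨hq, hidx⟩
    rcases Nat.lt_trichotomy q.1 p.1 with h | h | h
    · exfalso
      obtain ⟨h1', h2', h3'⟩ := idx_eq_arith hC.he hq.1 (hC.le_e_of_mem hq) hp.2.1 h hidx.symm
      have hq1' : 1 ≤ q.1 := hq.1
      have hq2 : l q.1 = e := le_antisymm (hC.le_e hq.1) (h1' ▸ hq.2.2)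
      have hl9 : l (p.1 - 1) = e := by
        have hx : p.1 - 1 = q.1 := by omega
        rw [hx]; exact hq2
      exact hnl h3' (by omega) hl9
    · have : q.2 = p.2 := by unfold idxP at hidx; rw [h] at hidx; omega
      exact Prod.ext h this
    · exfalso
      have harith := idx_eq_arith hC.he hp.1 (hC.le_e_of_mem hp) hq.2.1 h hidx
      exact hne harith.1
  · rintro rfl
    exact ⟨hp, rfl⟩

/-! ### standard tableau helpers -/

variable {d : ℕ} {T : ℕ × ℕ → ℕ}

lemma Ctx.T_row_mono (hC : Ctx e l N1) (hT : IsStandardTableau (cells l) d T)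
    {a b b' : ℕ} (h3 : 1 ≤ b') (h4 : b' ≤ b) (h : (a, b) ∈ cells l) :
    T (a, b') ≤ T (a, b) := by
  induction b, h4 using Nat.le_induction with
  | base => exact le_rfl
  | succ n hn ih =>
    have hn' : (a, n) ∈ cells l := hC.cells_closed h h.1 le_rfl (by omega) (by omega)
    exact le_trans (ih hn') (le_of_lt (hT.2.2.2.1 a n hn' h))

lemma Ctx.T_col_mono (hC : Ctx e l N1) (hT : IsStandardTableau (cells l) d T)
    {a a' b : ℕ} (h3 : 1 ≤ a') (h4 : a' ≤ a) (h : (a, b) ∈ cells l) :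
    T (a', b) ≤ T (a, b) := by
  induction a, h4 using Nat.le_induction with
  | base => exact le_rfl
  | succ n hn ih =>
    have hn' : (n, b) ∈ cells l := hC.cells_closed h (by omega) (by omega) h.2.1 le_rfl
    exact le_trans (ih hn') (le_of_lt (hT.2.2.2.2 n b hn' h))

lemma Ctx.T_mono (hC : Ctx e l N1) (hT : IsStandardTableau (cells l) d T)
    {a b a' b' : ℕ} (h : (a, b) ∈ cells l) (h1 : 1 ≤ a') (h2 : a' ≤ a)
    (h3 : 1 ≤ b') (h4 : b' ≤ b) : T (a', b') ≤ T (a, b) := by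
  have hab' : (a', b) ∈ cells l := hC.cells_closed h h1 h2 h.2.1 le_rfl
  exact le_trans (hC.T_row_mono hT h3 h4 hab') (hC.T_col_mono hT h1 h2 h)

lemma Ctx.trunc_diagram (hC : Ctx e l N1) (hT : IsStandardTableau (cells l) d T) (t : ℕ) :
    IsDiagram {q | q ∈ cells l ∧ T q ≤ t} := by
  constructor
  · rintro p ⟨hp, _⟩; exact ⟨hp.1, hp.2.1⟩
  · rintro a b a' b' ⟨hab, hle⟩ h1 h2 h3 h4
    exact ⟨hC.cells_closed hab h1 h2 h3 h4, le_trans (hC.T_mono hT hab h1 h2 h3 h4) hle⟩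

lemma Ctx.trunc_card (hC : Ctx e l N1) (hd : (cells l).ncard = d)
    (hT : IsStandardTableau (cells l) d T) {t : ℕ} (ht : t ≤ d) :
    ({q | q ∈ cells l ∧ T q ≤ t} : Set (ℕ × ℕ)).ncard = t := by
  have hfin : ({q | q ∈ cells l ∧ T q ≤ t} : Set (ℕ × ℕ)).Finite :=
    hC.fin.subset (fun x hx => hx.1)
  have hinj : Set.InjOn T {q | q ∈ cells l ∧ T q ≤ t} :=
    fun x hx y hy hxy => hT.2.1 x hx.1 y hy.1 hxy
  have himg : T '' {q | q ∈ cells l ∧ T q ≤ t} = Set.Icc 1 t := by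
    ext s
    simp only [Set.mem_image, Set.mem_setOf_eq, Set.mem_Icc]
    constructor
    · rintro ⟨q, ⟨hq, hle⟩, rfl⟩
      exact ⟨(hT.1 q hq).1, hle⟩
    · rintro ⟨h1, h2⟩
      obtain ⟨p, hp, hTp⟩ := hT.2.2.1 s h1 (le_trans h2 ht)
      exact ⟨p, ⟨hp, by omega⟩, hTp⟩
  calc ({q | q ∈ cells l ∧ T q ≤ t} : Set (ℕ × ℕ)).ncard
      = (T '' {q | q ∈ cells l ∧ T q ≤ t}).ncard := (Set.ncard_image_of_injOn hinj).symm
    _ = (Set.Icc 1 t).ncard := by rw [himg]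
    _ = t := by rw [← Finset.coe_Icc, Set.ncard_coe_finset, Nat.card_Icc]; omega

/-! ### the function M -/

noncomputable def MF (e : ℕ) (l : ℕ → ℕ) (t : ℕ) : ℕ := sInf {m | t ≤ Rlad e l m}

lemma ladderWeight_eq_MF (s : ℕ) : ladderWeight e l s = ((MF e l s - 1 : ℕ) : ZMod e) := rfl

lemma Ctx.MF_set_nonempty (hC : Ctx e l N1) {d t : ℕ} (hd : (cells l).ncard = d) (ht : t ≤ d) :
    {m | t ≤ Rlad e l m}.Nonempty := by
  obtain ⟨M0, hM0⟩ := hC.exists_Rlad_top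
  exact ⟨M0, by rw [Set.mem_setOf_eq, hM0 M0 le_rfl, hd]; exact ht⟩

lemma Ctx.Rlad_MF (hC : Ctx e l N1) {d t : ℕ} (hd : (cells l).ncard = d) (ht : t ≤ d) :
    t ≤ Rlad e l (MF e l t) := Nat.sInf_mem (hC.MF_set_nonempty hd ht)

lemma Ctx.MF_pos (hC : Ctx e l N1) {d t : ℕ} (hd : (cells l).ncard = d) (ht : 1 ≤ t)
    (htd : t ≤ d) : 1 ≤ MF e l t := by
  have hmem := Nat.sInf_mem (hC.MF_set_nonempty hd htd)
  rcases Nat.eq_zero_or_pos (MF e l t) with h | h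
  · exfalso
    rw [show sInf {m | t ≤ Rlad e l m} = MF e l t from rfl, h] at hmem
    simp only [Set.mem_setOf_eq, hC.Rlad_zero] at hmem
    omega
  · exact h

lemma Ctx.Rlad_MF_pred (hC : Ctx e l N1) {d t : ℕ} (hd : (cells l).ncard = d) (ht : 1 ≤ t)
    (htd : t ≤ d) : Rlad e l (MF e l t - 1) < t := by
  have h1 := hC.MF_pos hd ht htd
  have h2 : MF e l t - 1 < MF e l t := by omega
  have := Nat.notMem_of_lt_sInf h2
  simp only [Set.mem_setOf_eq] at this
  omega

lemma Ctx.MF_mono (hC : Ctx e l N1) {d t t' : ℕ} (hd : (cells l).ncard = d)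
    (h : t ≤ t') (ht' : t' ≤ d) : MF e l t ≤ MF e l t' :=
  Nat.sInf_le (le_trans h (hC.Rlad_MF hd ht'))

/-! ### rigidity -/

theorem Ctx.rigid (hC : Ctx e l N1) (hd : (cells l).ncard = d)
    (hT : T ∈ LWTableaux e d l (cells l)) :
    ∀ p ∈ cells l, Rlad e l (idxP e p - 1) < T p ∧ T p ≤ Rlad e l (idxP e p) := by
  obtain ⟨hstd, hoff, hres⟩ := hT
  set P : ℕ → Prop := fun t => ∀ q ∈ cells l,
    (idxP e q < MF e l t → T q ≤ t) ∧ (T q ≤ t → idxP e q ≤ MF e l t) with hP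
  have hP0 : P 0 := by
    intro q hq
    constructor
    · intro h
      exfalso
      have hMF0 : MF e l 0 = 0 := by
        rw [MF, Nat.sInf_eq_zero]
        left; simp
      omega
    · intro h
      have := (hstd.1 q hq).1
      omega
  have key : ∀ t, 1 ≤ t → t ≤ d → P (t - 1) →
      P t ∧ (∀ p ∈ cells l, T p = t → idxP e p = MF e l t) := by
    intro t ht1 htd hP'
    have hM1 : 1 ≤ MF e l t := hC.MF_pos hd ht1 htd
    have htR : t ≤ Rlad e l (MF e l t) := hC.Rlad_MF hd htd
    have hRM : Rlad e l (MF e l t - 1) < t := hC.Rlad_MF_pred hd ht1 htd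
    have hM'M : MF e l (t - 1) ≤ MF e l t := hC.MF_mono hd (by omega) htd
    have claim1 : ∀ q ∈ cells l, idxP e q < MF e l t → T q ≤ t - 1 := by
      intro q hq hqM
      by_cases hcase : idxP e q < MF e l (t - 1)
      · exact (hP' q hq).1 hcase
      · push_neg at hcase
        have hub : MF e l (t - 1) ≤ MF e l t - 1 := by omega
        have e1 : Rlad e l (MF e l (t - 1)) ≤ Rlad e l (MF e l t - 1) := hC.Rlad_mono hub
        have e3 : t - 1 ≤ Rlad e l (MF e l (t - 1)) := hC.Rlad_MF hd (by omega)
        have eq1 : Rlad e l (MF e l (t - 1)) = t - 1 := by omega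
        have eq2 : Rlad e l (MF e l t - 1) = t - 1 := by omega
        have hS'card : ({q | q ∈ cells l ∧ T q ≤ t - 1} : Set (ℕ × ℕ)).ncard = t - 1 :=
          hC.trunc_card hd hstd (by omega)
        have hA1card : (cells l ∩ {p | idxP e p ≤ MF e l (t - 1)}).ncard = t - 1 := by
          rw [← hC.Rlad_eq]; exact eq1
        have hA2card : (cells l ∩ {p | idxP e p ≤ MF e l t - 1}).ncard = t - 1 := by
          rw [← hC.Rlad_eq]; exact eq2
        have hsub : ({q | q ∈ cells l ∧ T q ≤ t - 1} : Set (ℕ × ℕ)) ⊆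
            cells l ∩ {p | idxP e p ≤ MF e l (t - 1)} :=
          fun x hx => ⟨hx.1, (hP' x hx.1).2 hx.2⟩
        have hS'A1 : ({q | q ∈ cells l ∧ T q ≤ t - 1} : Set (ℕ × ℕ)) =
            cells l ∩ {p | idxP e p ≤ MF e l (t - 1)} :=
          Set.eq_of_subset_of_ncard_le hsub (by omega) (hC.fin_sub _)
        have hA1A2 : (cells l ∩ {p | idxP e p ≤ MF e l (t - 1)}) =
            cells l ∩ {p | idxP e p ≤ MF e l t - 1} :=
          Set.eq_of_subset_of_ncard_le
            (fun x hx => ⟨hx.1, le_trans hx.2 hub⟩) (by omega) (hC.fin_sub _)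
        have hq2 : q ∈ cells l ∩ {p | idxP e p ≤ MF e l t - 1} := ⟨hq, by
          simp only [Set.mem_setOf_eq]; omega⟩
        rw [← hA1A2, ← hS'A1] at hq2
        exact hq2.2
    obtain ⟨A, hA, hTA⟩ := hstd.2.2.1 t ht1 htd
    have hA1 : 1 ≤ A.1 := hA.1
    have hA2 : 1 ≤ A.2 := hA.2.1
    have claim2 : idxP e A = MF e l t := by
      have hge : MF e l t ≤ idxP e A := by
        by_contra h
        push_neg at h
        have := claim1 A hA h
        omega
      have hcast : ((idxP e A - 1 : ℕ) : ZMod e) = ((MF e l t - 1 : ℕ) : ZMod e) := by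
        rw [← res_eq_idx hC.he hA1 hA2, hres A hA, hTA, ladderWeight_eq_MF]
      have hmod : idxP e A - 1 ≡ MF e l t - 1 [MOD e] := by
        rwa [ZMod.natCast_eq_natCast_iff'] at hcast
      have hmodeq : MF e l t ≡ idxP e A [MOD e] := by
        have h2 := Nat.ModEq.add_right 1 hmod
        have hia : 1 ≤ idxP e A := by unfold idxP; omega
        have e1 : idxP e A - 1 + 1 = idxP e A := by omega
        have e2 : MF e l t - 1 + 1 = MF e l t := by omega
        rw [e1, e2] at h2
        exact h2.symm
      rcases modeq_cases hmodeq hge with h | h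
      · exact h
      · exfalso
        have hee := hC.he
        have hAeta : (A.1, A.2) ∈ cells l := by rw [Prod.mk.eta]; exact hA
        by_cases h2 : 2 ≤ A.2
        · have hq : (A.1, A.2 - 1) ∈ cells l :=
            hC.cells_closed hAeta hA1 le_rfl (by omega) (by omega)
          have hlt : T (A.1, A.2 - 1) < T A := by
            have := hstd.2.2.2.1 A.1 (A.2 - 1) hq
              (by rw [show A.2 - 1 + 1 = A.2 by omega, Prod.mk.eta]; exact hA)
            rwa [show A.2 - 1 + 1 = A.2 by omega, Prod.mk.eta] at this
          have hle' : T (A.1, A.2 - 1) ≤ t - 1 := by omega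
          have hidxle : idxP e (A.1, A.2 - 1) ≤ MF e l (t - 1) := (hP' _ hq).2 hle'
          have hidxq : idxP e (A.1, A.2 - 1) = idxP e A - 1 := by unfold idxP; simp; omega
          omega
        · by_cases h3 : 2 ≤ A.1
          · have hq : (A.1 - 1, 1) ∈ cells l := by
              refine ⟨by omega, le_rfl, ?_⟩
              calc 1 ≤ l A.1 := le_trans (by omega) hA.2.2
                _ ≤ l (A.1 - 1) := hC.mono' (by omega) (by omega)
            have hAeq : A = (A.1 - 1 + 1, 1) := Prod.ext (by simp; omega) (by simp; omega)
            have hlt : T (A.1 - 1, 1) < T A := by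
              have := hstd.2.2.2.2 (A.1 - 1) 1 hq (by rw [← hAeq]; exact hA)
              rwa [← hAeq] at this
            have hle' : T (A.1 - 1, 1) ≤ t - 1 := by omega
            have hidxle : idxP e (A.1 - 1, 1) ≤ MF e l (t - 1) := (hP' _ hq).2 hle'
            have hidxq : idxP e A = idxP e (A.1 - 1, 1) + (e - 1) := by
              conv_lhs => rw [hAeq]
              exact idx_col_succ (by omega)
            omega
          · have hA11 : A.1 = 1 := by omega
            have : (A.1 - 1) * (e - 1) = 0 := by rw [show A.1 - 1 = 0 by omega]; exact zero_mul _
            have : idxP e A = 1 := by unfold idxP; omega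
            omega
    refine ⟨?_, ?_⟩
    · intro q hq
      constructor
      · intro h
        exact le_trans (claim1 q hq h) (by omega)
      · intro h
        rcases Nat.lt_or_ge (T q) t with h' | h'
        · exact le_trans ((hP' q hq).2 (by omega)) hM'M
        · have : T q = t := by omega
          have : q = A := hstd.2.1 q hq A hA (by rw [this, hTA])
          rw [this, claim2]
    · intro p hp hTp
      have : p = A := hstd.2.1 p hp A hA (by rw [hTp, hTA])
      rw [this]
      exact claim2
  have main : ∀ t, t ≤ d → P t := by
    intro t
    induction t with
    | zero => intro _; exact hP0
    | succ n ih =>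
      intro h
      have := key (n + 1) (by omega) h (by simpa using ih (by omega))
      exact this.1
  intro p hp
  have ht1 : 1 ≤ T p := (hstd.1 p hp).1
  have htd : T p ≤ d := (hstd.1 p hp).2
  have hk := key (T p) ht1 htd (main (T p - 1) (by omega))
  have hidx : idxP e p = MF e l (T p) := hk.2 p hp rfl
  rw [hidx]
  exact ⟨hC.Rlad_MF_pred hd ht1 htd, hC.Rlad_MF hd htd⟩

/-! ### degree node evaluation -/

lemma pred_mul_expand (E : ℕ) {x : ℕ} (h : 2 ≤ x) : (x - 1) * E = (x - 1 - 1) * E + E := by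
  obtain ⟨y, rfl⟩ : ∃ y, x = y + 2 := ⟨x - 2, by omega⟩
  show (y + 2 - 1) * E = (y + 2 - 1 - 1) * E + E
  have h1 : y + 2 - 1 = y + 1 := by omega
  have h2 : y + 2 - 1 - 1 = y := by omega
  rw [h1, Nat.add_sub_cancel, Nat.add_mul, one_mul]

open Classical in
theorem Ctx.degNode_eval (hC : Ctx e l N1) {p : ℕ × ℕ} (hp : p ∈ cells l) {μ : Set (ℕ × ℕ)}
    (hμd : IsDiagram μ) (hmulam : μ ⊆ cells l) (hpμ : p ∈ μ)
    (hlow : ∀ q ∈ cells l, idxP e q < idxP e p → q ∈ μ)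
    (hhigh : ∀ q ∈ μ, idxP e q ≤ idxP e p) :
    degNode e μ p = if p.2 = e then (if (p.1 + 1, 1) ∈ μ then -1 else 1) else 0 := by
  have hee := hC.he
  have hp1 : 1 ≤ p.1 := hp.1
  have hp2 : 1 ≤ p.2 := hp.2.1
  have hpe : p.2 ≤ e := hC.le_e_of_mem hp
  -- forward direction for removable nodes
  have forward_rem : ∀ q, Removable μ q → res e q = res e p → p.1 < q.1 →
      p.2 = e ∧ q = (p.1 + 1, 1) := by
    intro q hqrem hr hlt
    obtain ⟨hqμ, _⟩ := hqrem
    have hqlam := hmulam hqμ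
    have hq1 : 1 ≤ q.1 := hqlam.1
    have hq2 : 1 ≤ q.2 := hqlam.2.1
    have hmod := res_modeq hC.he hp1 hp2 hq1 hq2 hr
    have hle : idxP e q ≤ idxP e p := hhigh q hqμ
    rcases modeq_cases hmod hle with h | h
    · obtain ⟨hb, hc, hd'⟩ := idx_eq_arith hC.he hp1 hpe hq2 hlt
        (show q.2 + (q.1 - 1) * (e - 1) = p.2 + (p.1 - 1) * (e - 1) from h.symm)
      exact ⟨hb, Prod.ext (by simpa using hc) (by simpa using hd')⟩
    · exfalso
      have := idx_gap hC.he hp1 hpe hq2 hlt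
      unfold idxP at h
      omega
  -- forward direction for addable nodes
  have forward_add : ∀ q, Addable μ q → res e q = res e p → p.1 < q.1 →
      p.2 = e ∧ q = (p.1 + 1, 1) := by
    intro q hqadd hr hlt
    obtain ⟨hqnμ, hqd⟩ := hqadd
    have hqc := hqd.1 q (Or.inr rfl)
    have hq1 : 1 ≤ q.1 := hqc.1
    have hq2 : 1 ≤ q.2 := hqc.2
    have hq1' : 2 ≤ q.1 := by omega
    have hup : (q.1 - 1, q.2) ∈ μ := by
      have hmem : (q.1, q.2) ∈ μ ∪ {q} := by rw [Prod.mk.eta]; exact Or.inr rfl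
      have := hqd.2 q.1 q.2 (q.1 - 1) q.2 hmem (by omega) (by omega) hq2 le_rfl
      rcases this with h | h
      · exact h
      · exfalso
        rw [Set.mem_singleton_iff] at h
        have := congrArg Prod.fst h
        simp only at this
        omega
    have hub : idxP e (q.1 - 1, q.2) ≤ idxP e p := hhigh _ hup
    have hstep : idxP e q = idxP e (q.1 - 1, q.2) + (e - 1) := by
      unfold idxP
      simp only
      have hx := pred_mul_expand (e - 1) hq1'
      omega
    have hmod := res_modeq hC.he hp1 hp2 hq1 hq2 hr
    have hgap := idx_gap hC.he hp1 hpe hq2 hlt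
    have heq : idxP e q = idxP e p := by
      rcases le_or_gt (idxP e q) (idxP e p) with hle | hlt2
      · rcases modeq_cases hmod hle with h | h
        · exact h.symm
        · exfalso; unfold idxP at h; omega
      · rcases modeq_cases hmod.symm (le_of_lt hlt2) with h | h
        · exact h
        · exfalso; omega
    obtain ⟨hb, hc, hd'⟩ := idx_eq_arith hC.he hp1 hpe hq2 hlt
      (show q.2 + (q.1 - 1) * (e - 1) = p.2 + (p.1 - 1) * (e - 1) from heq)
    exact ⟨hb, Prod.ext (by simpa using hc) (by simpa using hd')⟩
  by_cases hbe : p.2 = e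
  · have hlp : l p.1 = e := le_antisymm (hC.le_e hp.1) (hbe ▸ hp.2.2)
    have hB0lam : (p.1 + 1, 1) ∈ cells l := hC.pair_lower_mem hp.1 hlp
    have hidxB0 : idxP e (p.1 + 1, 1) = idxP e p := by
      have h1 := idx_pair_eq hC.he hp1 (a := p.1)
      have h2 : p = (p.1, e) := Prod.ext rfl hbe
      rw [h1, ← h2]
    have hresB0 : res e (p.1 + 1, 1) = res e p := by
      rw [res_eq_idx hC.he (by simp) (by simp), res_eq_idx hC.he hp1 hp2, hidxB0]
    have hidxp : idxP e p = e + (p.1 - 1) * (e - 1) := by unfold idxP; omega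
    by_cases hmem : (p.1 + 1, 1) ∈ μ
    · have hRem : {B | Removable μ B ∧ res e B = res e p ∧ p.1 < B.1} = {(p.1 + 1, 1)} := by
        ext q
        simp only [Set.mem_setOf_eq, Set.mem_singleton_iff]
        constructor
        · rintro ⟨hq, hr, hlt⟩
          exact (forward_rem q hq hr hlt).2
        · rintro rfl
          refine ⟨⟨hmem, ?_, ?_⟩, hresB0, by simp⟩
          · rintro x ⟨hx, _⟩
            exact ⟨(hmulam hx).1, (hmulam hx).2.1⟩
          · rintro α β α' β' ⟨hαβ, hne⟩ h1 h2 h3 h4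
            refine ⟨hμd.2 α β α' β' hαβ h1 h2 h3 h4, ?_⟩
            intro hcontra
            rw [Set.mem_singleton_iff] at hcontra
            have hα' : α' = p.1 + 1 ∧ β' = 1 := by
              constructor
              · exact congrArg Prod.fst hcontra
              · exact congrArg Prod.snd hcontra
            rw [Set.mem_singleton_iff] at hne
            have hne2 : ¬(α = p.1 + 1 ∧ β = 1) := by
              rintro ⟨hc1, hc2⟩
              exact hne (Prod.ext hc1 hc2)
            have harith := idx_above_arith hC.he hp1 (by omega) (by omega) hne2
            have hhh := hhigh (α, β) hαβ
            unfold idxP at hhh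
            simp only at hhh
            omega
      have hAdd : {B | Addable μ B ∧ res e B = res e p ∧ p.1 < B.1} = ∅ := by
        ext q
        simp only [Set.mem_setOf_eq, Set.mem_empty_iff_false, iff_false, not_and]
        intro hq hr hlt
        have := (forward_add q hq hr hlt).2
        exact hq.1 (this ▸ hmem)
      rw [degNode, hRem, hAdd]
      simp [hbe, hmem]
    · have hAdd : {B | Addable μ B ∧ res e B = res e p ∧ p.1 < B.1} = {(p.1 + 1, 1)} := by
        ext q
        simp only [Set.mem_setOf_eq, Set.mem_singleton_iff]
        constructor
        · rintro ⟨hq, hr, hlt⟩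
          exact (forward_add q hq hr hlt).2
        · rintro rfl
          refine ⟨⟨hmem, ?_, ?_⟩, hresB0, by simp⟩
          · rintro x (hx | hx)
            · exact ⟨(hmulam hx).1, (hmulam hx).2.1⟩
            · rw [Set.mem_singleton_iff] at hx
              rw [hx]
              exact ⟨by simp, by simp⟩
          · rintro α β α' β' (hαβ | hαβ) h1 h2 h3 h4
            · exact Or.inl (hμd.2 α β α' β' hαβ h1 h2 h3 h4)
            · rw [Set.mem_singleton_iff] at hαβ
              have hα : α = p.1 + 1 := congrArg Prod.fst hαβ
              have hβ : β = 1 := congrArg Prod.snd hαβ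
              by_cases hα' : α' = p.1 + 1
              · right
                rw [Set.mem_singleton_iff]
                exact Prod.ext hα' (by omega)
              · left
                have hβ'1 : β' = 1 := by omega
                have hlα' : 1 ≤ l α' := by
                  calc (1 : ℕ) ≤ e := by omega
                    _ = l p.1 := hlp.symm
                    _ ≤ l α' := hC.mono' h1 (by omega)
                have hmemc : (α', β') ∈ cells l := ⟨h1, by omega, by show β' ≤ l α'; omega⟩
                apply hlow (α', β') hmemc
                show idxP e (α', β') < idxP e p
                have hmr := idx_mono_row hC.he (a' := α') (a := p.1) h1 (by omega)
                unfold idxP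
                simp only
                omega
      have hRem : {B | Removable μ B ∧ res e B = res e p ∧ p.1 < B.1} = ∅ := by
        ext q
        simp only [Set.mem_setOf_eq, Set.mem_empty_iff_false, iff_false, not_and]
        intro hq hr hlt
        have h2 := (forward_rem q hq hr hlt).2
        exact hmem (h2 ▸ hq.1)
      rw [degNode, hRem, hAdd]
      simp [hbe, hmem]
  · have hAdd : {B | Addable μ B ∧ res e B = res e p ∧ p.1 < B.1} = ∅ := by
      ext q
      simp only [Set.mem_setOf_eq, Set.mem_empty_iff_false, iff_false, not_and]
      intro hq hr hlt
      exact absurd (forward_add q hq hr hlt).1 hbe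
    have hRem : {B | Removable μ B ∧ res e B = res e p ∧ p.1 < B.1} = ∅ := by
      ext q
      simp only [Set.mem_setOf_eq, Set.mem_empty_iff_false, iff_false, not_and]
      intro hq hr hlt
      exact absurd (forward_rem q hq hr hlt).1 hbe
    rw [degNode, hRem, hAdd]
    simp [hbe]

/-! ### the explicit ladder tableaux -/

def slotF (e : ℕ) (l : ℕ → ℕ) (σ : Finset ℕ) (p : ℕ × ℕ) : ℕ :=
  if p.2 = e then (if p.1 - 1 ∈ σ then 1 else 2)
  else if p.2 = 1 ∧ 2 ≤ p.1 ∧ l (p.1 - 1) = e then (if p.1 - 2 ∈ σ then 2 else 1)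
  else 1

open Classical in
noncomputable def TF (e : ℕ) (l : ℕ → ℕ) (σ : Finset ℕ) (p : ℕ × ℕ) : ℕ :=
  if p ∈ cells l then Rlad e l (idxP e p - 1) + slotF e l σ p else 0

lemma slotF_bounds (σ : Finset ℕ) (p : ℕ × ℕ) : 1 ≤ slotF e l σ p ∧ slotF e l σ p ≤ 2 := by
  unfold slotF; split_ifs <;> omega

lemma Ctx.Rlad_pred (hC : Ctx e l N1) {m : ℕ} (h : 1 ≤ m) :
    Rlad e l m = Rlad e l (m - 1) + (cells l ∩ {q | idxP e q = m}).ncard := by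
  obtain ⟨n, rfl⟩ : ∃ n, m = n + 1 := ⟨m - 1, by omega⟩
  rw [Nat.add_sub_cancel]
  exact hC.Rlad_succ n

lemma idx_partner (he : 2 ≤ e) {p : ℕ × ℕ} (h1 : 1 ≤ p.1) (hbe : p.2 = e) :
    idxP e (p.1 + 1, 1) = idxP e p := by
  have h2 : p = (p.1, e) := Prod.ext rfl hbe
  rw [idx_pair_eq he h1, ← h2]

lemma idx_pos_of_mem {p : ℕ × ℕ} (hp : p ∈ cells l) : 1 ≤ idxP e p := by
  have := hp.2.1; unfold idxP; omega

lemma partner_ne (he : 2 ≤ e) {p : ℕ × ℕ} (hbe : p.2 = e) : p ≠ (p.1 + 1, 1) := by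
  intro h
  have := congrArg Prod.snd h
  simp only at this
  omega

lemma upper_ne_lower (he : 2 ≤ e) {p : ℕ × ℕ} (hbe : p.2 = 1) : (p.1 - 1, e) ≠ p := by
  intro h
  have := congrArg Prod.snd h
  simp only at this
  omega

/-- the level-set cardinality built into `Rlad` -/
lemma Ctx.TF_bounds (hC : Ctx e l N1) (σ : Finset ℕ) {p : ℕ × ℕ} (hp : p ∈ cells l) :
    Rlad e l (idxP e p - 1) < TF e l σ p ∧ TF e l σ p ≤ Rlad e l (idxP e p) := by
  have hs := slotF_bounds (e := e) (l := l) σ p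
  rw [TF, if_pos hp]
  refine ⟨by omega, ?_⟩
  rw [hC.Rlad_pred (idx_pos_of_mem hp)]
  by_cases h1 : p.2 = e
  · rw [hC.ladder_set_upper hp h1, Set.ncard_pair (partner_ne hC.he h1)]
    omega
  · by_cases h2 : p.2 = 1 ∧ 2 ≤ p.1 ∧ l (p.1 - 1) = e
    · rw [hC.ladder_set_lower hp h2.1 h2.2.1 h2.2.2,
        Set.ncard_insert_of_notMem (by simpa using upper_ne_lower hC.he h2.1),
        Set.ncard_singleton]
      omega
    · rw [hC.ladder_set_single hp (by tauto), Set.ncard_singleton]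
      have hss : slotF e l σ p = 1 := by
        unfold slotF
        rw [if_neg h1, if_neg h2]
      omega

lemma Ctx.TF_lt (hC : Ctx e l N1) (σ : Finset ℕ) {p q : ℕ × ℕ} (hp : p ∈ cells l)
    (hq : q ∈ cells l) (h : idxP e p < idxP e q) : TF e l σ p < TF e l σ q :=
  calc TF e l σ p ≤ Rlad e l (idxP e p) := (hC.TF_bounds σ hp).2
    _ ≤ Rlad e l (idxP e q - 1) := hC.Rlad_mono (by omega)
    _ < TF e l σ q := (hC.TF_bounds σ hq).1

lemma slot_upper (σ : Finset ℕ) {p : ℕ × ℕ} (hbe : p.2 = e) :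
    slotF e l σ p = if p.1 - 1 ∈ σ then 1 else 2 := by
  unfold slotF; rw [if_pos hbe]

lemma slot_partner (he : 2 ≤ e) (σ : Finset ℕ) {p : ℕ × ℕ} (hp1 : 1 ≤ p.1) (hlp : l p.1 = e) :
    slotF e l σ (p.1 + 1, 1) = if p.1 - 1 ∈ σ then 2 else 1 := by
  unfold slotF
  have c1 : ¬((p.1 + 1, 1).2 = e) := by show ¬((1 : ℕ) = e); omega
  have c2 : (p.1 + 1, 1).2 = 1 ∧ 2 ≤ (p.1 + 1, 1).1 ∧ l ((p.1 + 1, 1).1 - 1) = e := by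
    refine ⟨rfl, by show 2 ≤ p.1 + 1; omega, ?_⟩
    show l (p.1 + 1 - 1) = e
    rw [Nat.add_sub_cancel]; exact hlp
  rw [if_neg c1, if_pos c2, show (p.1 + 1, 1).1 - 2 = p.1 - 1 from by show p.1 + 1 - 2 = p.1 - 1; omega]

lemma Ctx.slot_pair (hC : Ctx e l N1) (σ : Finset ℕ) {p : ℕ × ℕ} (hp1 : 1 ≤ p.1)
    (hbe : p.2 = e) (hlp : l p.1 = e) :
    slotF e l σ p + slotF e l σ (p.1 + 1, 1) = 3 := by
  rw [slot_upper σ hbe, slot_partner hC.he σ hp1 hlp]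
  split_ifs <;> omega
lemma Ctx.TF_val (hC : Ctx e l N1) (σ : Finset ℕ) {p : ℕ × ℕ} (hp : p ∈ cells l) :
    TF e l σ p = Rlad e l (idxP e p - 1) + slotF e l σ p := by
  rw [TF, if_pos hp]

lemma idx_lower (he : 2 ≤ e) {p : ℕ × ℕ} (h2 : 2 ≤ p.1) (hb : p.2 = 1) :
    idxP e (p.1 - 1, e) = idxP e p := by
  have h3 : p = ((p.1 - 1, e).1 + 1, 1) := Prod.ext (by show p.1 = p.1 - 1 + 1; omega) hb
  conv_rhs => rw [h3]
  exact (idx_partner he (by show 1 ≤ p.1 - 1; omega) rfl).symm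

lemma slot_lower (he : 2 ≤ e) (σ : Finset ℕ) {p : ℕ × ℕ}
    (h2 : p.2 = 1 ∧ 2 ≤ p.1 ∧ l (p.1 - 1) = e) :
    slotF e l σ p = if p.1 - 2 ∈ σ then 2 else 1 := by
  unfold slotF
  rw [if_neg (by omega), if_pos h2]

lemma Ctx.lower_upper_mem (hC : Ctx e l N1) {p : ℕ × ℕ}
    (h2 : p.2 = 1 ∧ 2 ≤ p.1 ∧ l (p.1 - 1) = e) : (p.1 - 1, e) ∈ cells l :=
  ⟨by show 1 ≤ p.1 - 1; omega, by show 1 ≤ e; have := hC.he; omega,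
   by show e ≤ l (p.1 - 1); rw [h2.2.2]⟩

lemma Ctx.upper_partner_mem (hC : Ctx e l N1) {p : ℕ × ℕ} (hp : p ∈ cells l) (h1 : p.2 = e) :
    (p.1 + 1, 1) ∈ cells l :=
  hC.pair_lower_mem hp.1 (le_antisymm (hC.le_e hp.1) (h1 ▸ hp.2.2))

lemma Ctx.TF_injOn (hC : Ctx e l N1) (σ : Finset ℕ) :
    ∀ p ∈ cells l, ∀ q ∈ cells l, TF e l σ p = TF e l σ q → p = q := by
  intro p hp q hq heq
  rcases Nat.lt_trichotomy (idxP e p) (idxP e q) with h | h | h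
  · exact absurd heq (ne_of_lt (hC.TF_lt σ hp hq h))
  · have hqlev : q ∈ cells l ∩ {x | idxP e x = idxP e p} := ⟨hq, h.symm⟩
    have hslot : slotF e l σ p = slotF e l σ q := by
      rw [hC.TF_val σ hp, hC.TF_val σ hq] at heq
      rw [h] at heq
      omega
    by_cases h1 : p.2 = e
    · rw [hC.ladder_set_upper hp h1] at hqlev
      rcases hqlev with h2 | h2
      · exact h2.symm
      · exfalso
        rw [Set.mem_singleton_iff] at h2
        have hlp : l p.1 = e := le_antisymm (hC.le_e hp.1) (h1 ▸ hp.2.2)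
        have hsp := hC.slot_pair σ hp.1 h1 hlp
        rw [← h2] at hsp
        omega
    · by_cases h2 : p.2 = 1 ∧ 2 ≤ p.1 ∧ l (p.1 - 1) = e
      · rw [hC.ladder_set_lower hp h2.1 h2.2.1 h2.2.2] at hqlev
        rcases hqlev with h3 | h3
        · exfalso
          have hpeq : ((p.1 - 1, e).1 + 1, 1) = p := (Prod.ext (by show p.1 - 1 + 1 = p.1; omega)
            (by show (1 : ℕ) = p.2; omega))
          have hsp := hC.slot_pair σ (p := (p.1 - 1, e)) (by show 1 ≤ p.1 - 1; omega) rfl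
            (by show l (p.1 - 1) = e; exact h2.2.2)
          rw [hpeq, ← h3] at hsp
          omega
        · rw [Set.mem_singleton_iff] at h3
          exact h3.symm
      · rw [hC.ladder_set_single hp (by tauto)] at hqlev
        rw [Set.mem_singleton_iff] at hqlev
        exact hqlev.symm
  · exact absurd heq.symm (ne_of_lt (hC.TF_lt σ hq hp h))

lemma Ctx.TF_surj (hC : Ctx e l N1) {d : ℕ} (hd : (cells l).ncard = d) (σ : Finset ℕ)
    {s : ℕ} (h1 : 1 ≤ s) (h2 : s ≤ d) : ∃ p ∈ cells l, TF e l σ p = s := by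
  set M := MF e l s with hM
  have hM1 : 1 ≤ M := hC.MF_pos hd h1 h2
  have hsR : s ≤ Rlad e l M := hC.Rlad_MF hd h2
  have hpred : Rlad e l (M - 1) < s := hC.Rlad_MF_pred hd h1 h2
  have hcard := hC.Rlad_pred hM1
  have hnonempty : (cells l ∩ {q | idxP e q = M}).Nonempty := by
    apply Set.nonempty_of_ncard_ne_zero
    omega
  obtain ⟨p, hpcell, hpidx⟩ := hnonempty
  rw [Set.mem_setOf_eq] at hpidx
  by_cases hb1 : p.2 = e
  · have hlp : l p.1 = e := le_antisymm (hC.le_e hpcell.1) (hb1 ▸ hpcell.2.2)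
    have hBcell : (p.1 + 1, 1) ∈ cells l := hC.upper_partner_mem hpcell hb1
    have hBidx : idxP e (p.1 + 1, 1) = M := by rw [idx_partner hC.he hpcell.1 hb1, hpidx]
    have hcard2 : (cells l ∩ {q | idxP e q = M}).ncard = 2 := by
      rw [← hpidx, hC.ladder_set_upper hpcell hb1, Set.ncard_pair (partner_ne hC.he hb1)]
    have hsp := hC.slot_pair σ hpcell.1 hb1 hlp
    have hs1 := slotF_bounds (e := e) (l := l) σ p
    have hs2 := slotF_bounds (e := e) (l := l) σ (p.1 + 1, 1)
    have hTp := hC.TF_val σ hpcell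
    have hTB := hC.TF_val σ hBcell
    rw [hpidx] at hTp
    rw [hBidx] at hTB
    rcases Nat.lt_or_ge s (Rlad e l (M - 1) + 2) with hcase | hcase
    · -- s = R(M-1) + 1 : want slot 1
      rcases Nat.eq_or_lt_of_le hs1.1 with hsl | hsl
      · exact ⟨p, hpcell, by omega⟩
      · exact ⟨(p.1 + 1, 1), hBcell, by omega⟩
    · -- s = R(M-1) + 2 : want slot 2
      rcases Nat.eq_or_lt_of_le hs1.1 with hsl | hsl
      · exact ⟨(p.1 + 1, 1), hBcell, by omega⟩
      · exact ⟨p, hpcell, by omega⟩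
  · by_cases hb2 : p.2 = 1 ∧ 2 ≤ p.1 ∧ l (p.1 - 1) = e
    · have hUcell : (p.1 - 1, e) ∈ cells l := hC.lower_upper_mem hb2
      have hUidx : idxP e (p.1 - 1, e) = M := by rw [idx_lower hC.he hb2.2.1 hb2.1, hpidx]
      have hcard2 : (cells l ∩ {q | idxP e q = M}).ncard = 2 := by
        rw [← hpidx, hC.ladder_set_lower hpcell hb2.1 hb2.2.1 hb2.2.2,
          Set.ncard_insert_of_notMem (by simpa using upper_ne_lower hC.he hb2.1),
          Set.ncard_singleton]
      have hpeq : ((p.1 - 1, e).1 + 1, 1) = p := Prod.ext (by show p.1 - 1 + 1 = p.1; omega)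
        (by show (1 : ℕ) = p.2; omega)
      have hsp : slotF e l σ (p.1 - 1, e) + slotF e l σ p = 3 := by
        have := hC.slot_pair σ (p := (p.1 - 1, e)) (by show 1 ≤ p.1 - 1; omega) rfl
          (by show l (p.1 - 1) = e; exact hb2.2.2)
        rwa [hpeq] at this
      have hs1 := slotF_bounds (e := e) (l := l) σ p
      have hs2 := slotF_bounds (e := e) (l := l) σ (p.1 - 1, e)
      have hTp := hC.TF_val σ hpcell
      have hTU := hC.TF_val σ hUcell
      rw [hpidx] at hTp
      rw [hUidx] at hTU
      rcases Nat.lt_or_ge s (Rlad e l (M - 1) + 2) with hcase | hcase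
      · rcases Nat.eq_or_lt_of_le hs1.1 with hsl | hsl
        · exact ⟨p, hpcell, by omega⟩
        · exact ⟨(p.1 - 1, e), hUcell, by omega⟩
      · rcases Nat.eq_or_lt_of_le hs1.1 with hsl | hsl
        · exact ⟨(p.1 - 1, e), hUcell, by omega⟩
        · exact ⟨p, hpcell, by omega⟩
    · have hcard1 : (cells l ∩ {q | idxP e q = M}).ncard = 1 := by
        rw [← hpidx, hC.ladder_set_single hpcell (by tauto), Set.ncard_singleton]
      have hTp := hC.TF_val σ hpcell
      have hslot1 : slotF e l σ p = 1 := by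
        unfold slotF
        rw [if_neg hb1, if_neg hb2]
      rw [hpidx] at hTp
      exact ⟨p, hpcell, by omega⟩

lemma Ctx.TF_res (hC : Ctx e l N1) {d : ℕ} (hd : (cells l).ncard = d) (σ : Finset ℕ)
    {p : ℕ × ℕ} (hp : p ∈ cells l) : res e p = ladderWeight e l (TF e l σ p) := by
  have hb := hC.TF_bounds σ hp
  have hMF : MF e l (TF e l σ p) = idxP e p := by
    rw [MF]
    apply le_antisymm
    · exact Nat.sInf_le (show TF e l σ p ≤ Rlad e l (idxP e p) from hb.2)
    · refine le_csInf ⟨idxP e p, show TF e l σ p ≤ Rlad e l (idxP e p) from hb.2⟩ ?_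
      intro m hm
      rw [Set.mem_setOf_eq] at hm
      by_contra hcon
      push_neg at hcon
      have : Rlad e l m ≤ Rlad e l (idxP e p - 1) := hC.Rlad_mono (by omega)
      omega
  rw [ladderWeight_eq_MF, hMF, ← res_eq_idx hC.he hp.1 hp.2.1]

lemma Ctx.TF_standard (hC : Ctx e l N1) {d : ℕ} (hd : (cells l).ncard = d) (σ : Finset ℕ) :
    IsStandardTableau (cells l) d (TF e l σ) := by
  refine ⟨?_, hC.TF_injOn σ, fun s h1 h2 => hC.TF_surj hd σ h1 h2, ?_, ?_⟩
  · intro p hp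
    have hb := hC.TF_bounds σ hp
    refine ⟨by omega, ?_⟩
    calc TF e l σ p ≤ Rlad e l (idxP e p) := hb.2
      _ ≤ (cells l).ncard := hC.Rlad_le _
      _ = d := hd
  · intro a b hab hab1
    apply hC.TF_lt σ hab hab1
    show b + (a - 1) * (e - 1) < (b + 1) + (a - 1) * (e - 1)
    omega
  · intro a b hab hab1
    apply hC.TF_lt σ hab hab1
    show b + (a - 1) * (e - 1) < b + (a + 1 - 1) * (e - 1)
    have hee := hC.he
    have ha1 : 1 ≤ a := hab.1
    have hx : (a + 1 - 1) * (e - 1) = (a - 1) * (e - 1) + (e - 1) := by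
      rw [show a + 1 - 1 = (a - 1) + 1 from by omega, Nat.add_mul, one_mul]
    omega

lemma Ctx.TF_mem_LWT (hC : Ctx e l N1) {d : ℕ} (hd : (cells l).ncard = d) (σ : Finset ℕ) :
    TF e l σ ∈ LWTableaux e d l (cells l) := by
  refine ⟨hC.TF_standard hd σ, fun p hp => ?_, fun p hp => hC.TF_res hd σ hp⟩
  rw [TF, if_neg hp]
lemma Ctx.TF_param_inj (hC : Ctx e l N1) :
    ∀ σ ∈ (Finset.range N1).powerset, ∀ σ' ∈ (Finset.range N1).powerset,
      TF e l σ = TF e l σ' → σ = σ' := by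
  intro σ hσ σ' hσ' h
  rw [Finset.mem_powerset] at hσ hσ'
  ext a
  by_cases ha : a < N1
  · have hcell : (a + 1, e) ∈ cells l := ⟨by show 1 ≤ a + 1; omega,
      by show 1 ≤ e; have := hC.he; omega,
      by show e ≤ l (a + 1); rw [hC.eqe (a + 1) (by omega) (by omega)]⟩
    have h1 := congrFun h (a + 1, e)
    rw [hC.TF_val σ hcell, hC.TF_val σ' hcell] at h1
    have h2 : slotF e l σ (a + 1, e) = slotF e l σ' (a + 1, e) := by omega
    rw [slot_upper (e := e) (l := l) σ (p := (a + 1, e)) rfl,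
      slot_upper (e := e) (l := l) σ' (p := (a + 1, e)) rfl,
      (show ((a + 1, e).1 - 1 = a) from by show a + 1 - 1 = a; omega)] at h2
    constructor
    · intro hin
      by_contra hnin
      rw [if_pos hin, if_neg hnin] at h2
      omega
    · intro hin
      by_contra hnin
      rw [if_neg hnin, if_pos hin] at h2
      omega
  · have c1 : a ∉ σ := fun hc => ha (Finset.mem_range.mp (hσ hc))
    have c2 : a ∉ σ' := fun hc => ha (Finset.mem_range.mp (hσ' hc))
    simp [c1, c2]

open Classical in
theorem Ctx.LWT_eq (hC : Ctx e l N1) {d : ℕ} (hd : (cells l).ncard = d) :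
    LWTableaux e d l (cells l) =
      ↑(Finset.image (fun σ => TF e l σ) (Finset.range N1).powerset) := by
  ext T
  simp only [Finset.coe_image, Set.mem_image, Finset.mem_coe, Finset.mem_powerset]
  constructor
  · intro hT
    obtain ⟨hstd, hoff, hres⟩ := hT
    have hrig := hC.rigid hd ⟨hstd, hoff, hres⟩
    refine ⟨Finset.filter (fun a => T (a + 1, e) < T (a + 2, 1)) (Finset.range N1),
      Finset.filter_subset _ _, ?_⟩
    funext p
    by_cases hp : p ∈ cells l
    · have hbnd := hrig p hp
      rw [hC.TF_val _ hp]
      by_cases h1 : p.2 = e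
      · have hlp : l p.1 = e := le_antisymm (hC.le_e hp.1) (h1 ▸ hp.2.2)
        have hBcell : (p.1 + 1, 1) ∈ cells l := hC.upper_partner_mem hp h1
        have hBidx : idxP e (p.1 + 1, 1) = idxP e p := idx_partner hC.he hp.1 h1
        have hbndB := hrig (p.1 + 1, 1) hBcell
        rw [hBidx] at hbndB
        have hcard2 : Rlad e l (idxP e p) = Rlad e l (idxP e p - 1) + 2 := by
          rw [hC.Rlad_pred (idx_pos_of_mem hp), hC.ladder_set_upper hp h1,
            Set.ncard_pair (partner_ne hC.he h1)]
        have hTne : T p ≠ T (p.1 + 1, 1) := fun hcc =>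
          (partner_ne hC.he h1) (hstd.2.1 p hp (p.1 + 1, 1) hBcell hcc)
        have hpN : p.1 ≤ N1 := by
          by_contra hcon
          exact absurd hlp (ne_of_lt (hC.lte p.1 (by omega)))
        have hp1 : 1 ≤ p.1 := hp.1
        have hmemiff : p.1 - 1 ∈ Finset.filter (fun a => T (a + 1, e) < T (a + 2, 1))
            (Finset.range N1) ↔ T p < T (p.1 + 1, 1) := by
          rw [Finset.mem_filter, Finset.mem_range]
          have e1 : p.1 - 1 + 1 = p.1 := by omega
          have e2 : p.1 - 1 + 2 = p.1 + 1 := by omega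
          rw [e1, e2]
          have e3 : (p.1, e) = p := Prod.ext rfl h1.symm
          rw [e3]
          constructor
          · exact fun h => h.2
          · exact fun h => ⟨by omega, h⟩
        rw [slot_upper _ h1]
        by_cases hord : T p < T (p.1 + 1, 1)
        · rw [if_pos (hmemiff.mpr hord)]
          omega
        · rw [if_neg (fun hc => hord (hmemiff.mp hc))]
          omega
      · by_cases h2 : p.2 = 1 ∧ 2 ≤ p.1 ∧ l (p.1 - 1) = e
        · have hUcell : (p.1 - 1, e) ∈ cells l := hC.lower_upper_mem h2
          have hUidx : idxP e (p.1 - 1, e) = idxP e p := idx_lower hC.he h2.2.1 h2.1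
          have hbndU := hrig (p.1 - 1, e) hUcell
          rw [hUidx] at hbndU
          have hcard2 : Rlad e l (idxP e p) = Rlad e l (idxP e p - 1) + 2 := by
            rw [hC.Rlad_pred (idx_pos_of_mem hp), hC.ladder_set_lower hp h2.1 h2.2.1 h2.2.2,
              Set.ncard_insert_of_notMem (by simpa using upper_ne_lower hC.he h2.1),
              Set.ncard_singleton]
          have hTne : T (p.1 - 1, e) ≠ T p := fun hcc =>
            (upper_ne_lower hC.he h2.1) (hstd.2.1 (p.1 - 1, e) hUcell p hp hcc)
          have hUN : p.1 - 1 ≤ N1 := by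
            by_contra hcon
            exact absurd h2.2.2 (ne_of_lt (hC.lte (p.1 - 1) (by omega)))
          have hmemiff : p.1 - 2 ∈ Finset.filter (fun a => T (a + 1, e) < T (a + 2, 1))
              (Finset.range N1) ↔ T (p.1 - 1, e) < T p := by
            rw [Finset.mem_filter, Finset.mem_range]
            have e1 : p.1 - 2 + 1 = p.1 - 1 := by omega
            have e2 : p.1 - 2 + 2 = p.1 := by omega
            rw [e1, e2]
            have e3 : (p.1, (1 : ℕ)) = p := Prod.ext rfl h2.1.symm
            rw [e3]
            constructor
            · exact fun h => h.2
            · exact fun h => ⟨by omega, h⟩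
          rw [slot_lower hC.he _ h2]
          by_cases hord : T (p.1 - 1, e) < T p
          · rw [if_pos (hmemiff.mpr hord)]
            omega
          · rw [if_neg (fun hc => hord (hmemiff.mp hc))]
            omega
        · have hcard1 : Rlad e l (idxP e p) = Rlad e l (idxP e p - 1) + 1 := by
            rw [hC.Rlad_pred (idx_pos_of_mem hp), hC.ladder_set_single hp (by tauto),
              Set.ncard_singleton]
          have hslot1 : slotF e l (Finset.filter (fun a => T (a + 1, e) < T (a + 2, 1))
              (Finset.range N1)) p = 1 := by
            unfold slotF
            rw [if_neg h1, if_neg h2]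
          rw [hslot1]
          omega
    · rw [TF, if_neg hp]
      exact (hoff p hp).symm
  · rintro ⟨σ, hσ, rfl⟩
    exact hC.TF_mem_LWT hd σ
open Classical in
lemma Ctx.degTab_TF (hC : Ctx e l N1) (σ : Finset ℕ) :
    degTab e (cells l) (TF e l σ) = ∑ a ∈ Finset.range N1, (if a ∈ σ then (1 : ℤ) else -1) := by
  rw [degTab, finsum_mem_eq_finite_toFinset_sum _ hC.fin]
  have hval : ∀ p ∈ hC.fin.toFinset,
      degNode e {q | q ∈ cells l ∧ TF e l σ q ≤ TF e l σ p} p =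
      if p.2 = e then (if p.1 - 1 ∈ σ then (1 : ℤ) else -1) else 0 := by
    intro p hp'
    have hp : p ∈ cells l := (Set.Finite.mem_toFinset _).mp hp'
    have hstd := hC.TF_standard (d := (cells l).ncard) rfl σ
    have hdiag : IsDiagram {q | q ∈ cells l ∧ TF e l σ q ≤ TF e l σ p} :=
      hC.trunc_diagram hstd (TF e l σ p)
    have hsub : {q | q ∈ cells l ∧ TF e l σ q ≤ TF e l σ p} ⊆ cells l := fun q hq => hq.1
    have hlow : ∀ q ∈ cells l, idxP e q < idxP e p →
        q ∈ {q | q ∈ cells l ∧ TF e l σ q ≤ TF e l σ p} :=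
      fun q hq h => ⟨hq, le_of_lt (hC.TF_lt σ hq hp h)⟩
    have hhigh : ∀ q ∈ {q | q ∈ cells l ∧ TF e l σ q ≤ TF e l σ p}, idxP e q ≤ idxP e p := by
      intro q hq
      by_contra hcon
      push_neg at hcon
      have h1 := hC.TF_lt σ hp hq.1 hcon
      have h2 := hq.2
      omega
    rw [hC.degNode_eval hp hdiag hsub ⟨hp, le_rfl⟩ hlow hhigh]
    by_cases hbe : p.2 = e
    · rw [if_pos hbe, if_pos hbe]
      have hlp : l p.1 = e := le_antisymm (hC.le_e hp.1) (hbe ▸ hp.2.2)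
      have hBcell : (p.1 + 1, 1) ∈ cells l := hC.upper_partner_mem hp hbe
      have hBidx : idxP e (p.1 + 1, 1) = idxP e p := idx_partner hC.he hp.1 hbe
      have hTp := hC.TF_val σ hp
      have hTB := hC.TF_val σ hBcell
      rw [hBidx] at hTB
      have hslots := hC.slot_pair σ hp.1 hbe hlp
      have hsu : slotF e l σ p = if p.1 - 1 ∈ σ then 1 else 2 :=
        slot_upper (e := e) (l := l) σ (p := p) hbe
      have hmemiff : ((p.1 + 1, 1) ∈ {q | q ∈ cells l ∧ TF e l σ q ≤ TF e l σ p}) ↔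
          p.1 - 1 ∉ σ := by
        simp only [Set.mem_setOf_eq]
        constructor
        · intro hq hin
          rw [if_pos hin] at hsu
          have := hq.2
          omega
        · intro hnin
          rw [if_neg hnin] at hsu
          exact ⟨hBcell, by omega⟩
      by_cases hσa : p.1 - 1 ∈ σ
      · rw [if_neg (fun hc => (hmemiff.mp hc) hσa), if_pos hσa]
      · rw [if_pos (hmemiff.mpr hσa), if_neg hσa]
    · rw [if_neg hbe, if_neg hbe]
  rw [Finset.sum_congr rfl hval, ← Finset.sum_filter]
  have hee := hC.he
  have him : hC.fin.toFinset.filter (fun p => p.2 = e) =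
      (Finset.range N1).image (fun a => (a + 1, e)) := by
    ext p
    simp only [Finset.mem_filter, Set.Finite.mem_toFinset, Finset.mem_image, Finset.mem_range]
    constructor
    · rintro ⟨hp, hbe⟩
      have hlp : l p.1 = e := le_antisymm (hC.le_e hp.1) (hbe ▸ hp.2.2)
      have hpN : p.1 ≤ N1 := by
        by_contra hcon
        exact absurd hlp (ne_of_lt (hC.lte p.1 (by omega)))
      have hp1 : 1 ≤ p.1 := hp.1
      exact ⟨p.1 - 1, by omega, Prod.ext (by show p.1 - 1 + 1 = p.1; omega)
        (by show (e : ℕ) = p.2; omega)⟩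
    · rintro ⟨a, ha, rfl⟩
      refine ⟨⟨by show 1 ≤ a + 1; omega, by show 1 ≤ e; omega, ?_⟩, rfl⟩
      show e ≤ l (a + 1)
      rw [hC.eqe (a + 1) (by omega) (by omega)]
  rw [him, Finset.sum_image ?hinj]
  case hinj =>
    intro x _ y _ hxy
    have := congrArg Prod.fst hxy
    simpa using this
  apply Finset.sum_congr rfl
  intro a _
  rw [show ((a + 1, e).1 - 1 = a) from by show a + 1 - 1 = a; omega]
/-! ### final assembly -/

theorem main_statement
    (e d s : ℕ) (he : 2 ≤ e) (hs : 1 ≤ s)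
    (l : ℕ → ℕ) (L K : ℕ → ℕ)
    (hl : (∀ r, 1 ≤ r → l (r + 1) ≤ l r) ∧ (cells l).Finite ∧ (cells l).ncard = d)
    (hrestr : ∀ r, 1 ≤ r → l r < l (r + 1) + e)
    (hL1 : L 1 = e)
    (hLdec : ∀ i, 1 ≤ i → i < s → L (i + 1) < L i)
    (hLpos : ∀ i, 1 ≤ i → i ≤ s → 1 ≤ L i)
    (hKpos : ∀ i, 1 ≤ i → i ≤ s → 1 ≤ K i)
    (hparts : ∀ i, 1 ≤ i → i ≤ s → ∀ rr, (∑ j ∈ Finset.Icc 1 (i - 1), K j) < rr →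
      rr ≤ ∑ j ∈ Finset.Icc 1 i, K j → l rr = L i)
    (hzero : ∀ rr, (∑ j ∈ Finset.Icc 1 s, K j) < rr → l rr = 0) :
    ∑ᶠ T ∈ LWTableaux e d l (cells l), LaurentPolynomial.T (degTab e (cells l) T) =
      ((LaurentPolynomial.T 1 + LaurentPolynomial.T (-1) : LaurentPolynomial ℤ)) ^ (K 1) := by
  classical
  obtain ⟨hmono, hfin, hncard⟩ := hl
  have hK1 : 1 ≤ K 1 := hKpos 1 le_rfl hs
  have hsum0 : (∑ j ∈ Finset.Icc 1 (1 - 1), K j) = 0 := by simp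
  have hsum1 : (∑ j ∈ Finset.Icc 1 1, K j) = K 1 := by simp
  have hl1K : ∀ r, 1 ≤ r → r ≤ K 1 → l r = e := by
    intro r h1 h2
    have := hparts 1 le_rfl hs r (by omega) (by omega)
    rw [this, hL1]
  have hchain : ∀ r r', 1 ≤ r → r ≤ r' → l r' ≤ l r := by
    intro r r' h1 h
    induction r', h using Nat.le_induction with
    | base => exact le_rfl
    | succ n hn ih => exact le_trans (hmono n (by omega)) ih
  have hs2 : 2 ≤ s := by
    by_contra hcon
    have hseq : s = 1 := by omega
    have h1 : l (K 1) = e := hl1K (K 1) hK1 le_rfl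
    have h2 : l (K 1 + 1) = 0 := by
      apply hzero
      rw [hseq]
      omega
    have := hrestr (K 1) hK1
    omega
  have hK2 : 1 ≤ K 2 := hKpos 2 (by omega) hs2
  have hsum2 : (∑ j ∈ Finset.Icc 1 2, K j) = K 1 + K 2 := by
    rw [Finset.sum_Icc_succ_top (by omega), hsum1]
  have hl2 : l (K 1 + 1) = L 2 := by
    apply hparts 2 (by omega) hs2
    · rw [show (2 : ℕ) - 1 = 1 from rfl, hsum1]; omega
    · omega
  have hL2e : L 2 < e := by rw [← hL1]; exact hLdec 1 le_rfl (by omega)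
  have hL2pos : 1 ≤ L 2 := hLpos 2 (by omega) hs2
  have hlte : ∀ r, K 1 < r → l r < e := by
    intro r hr
    calc l r ≤ l (K 1 + 1) := hchain (K 1 + 1) r (by omega) (by omega)
      _ = L 2 := hl2
      _ < e := hL2e
  have hC : Ctx e l (K 1) := ⟨he, hmono, hfin, hl1K, hlte, hK1, by rw [hl2]; exact hL2pos⟩
  rw [hC.LWT_eq hncard, finsum_mem_coe_finset, Finset.sum_image (hC.TF_param_inj)]
  have hTsum : ∀ (t : Finset ℕ) (g : ℕ → ℤ),
      LaurentPolynomial.T (R := ℤ) (∑ a ∈ t, g a) = ∏ a ∈ t, LaurentPolynomial.T (g a) := by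
    intro t g
    induction t using Finset.cons_induction with
    | empty => simp
    | cons a t ha ih => rw [Finset.sum_cons, Finset.prod_cons, LaurentPolynomial.T_add, ih]
  have hsummand : ∀ σ ∈ (Finset.range (K 1)).powerset,
      LaurentPolynomial.T (degTab e (cells l) (TF e l σ)) =
      (∏ _a ∈ σ, (LaurentPolynomial.T 1 : LaurentPolynomial ℤ)) *
      ∏ _a ∈ Finset.range (K 1) \ σ, (LaurentPolynomial.T (-1) : LaurentPolynomial ℤ) := by
    intro σ hσ
    rw [Finset.mem_powerset] at hσ
    rw [hC.degTab_TF σ, hTsum]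
    rw [← Finset.prod_sdiff hσ, mul_comm]
    congr 1
    · exact Finset.prod_congr rfl (fun a ha => by rw [if_pos ha])
    · refine Finset.prod_congr rfl (fun a ha => ?_)
      rw [Finset.mem_sdiff] at ha
      rw [if_neg ha.2]
  rw [Finset.sum_congr rfl hsummand, ← Finset.prod_add, Finset.prod_const, Finset.card_range]
/-- for `λ = (l₁^{k₁}, …, l_s^{k_s})` `e`-restricted with `l₁ = e` and
strictly decreasing part sizes, the ladder weight multiplicity is `(q + q⁻¹)^{k₁}`. -/
theorem ladder_weight_multiplicity_hook_case
    (e d s : ℕ) (he : 2 ≤ e) (hs : 1 ≤ s)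
    (l : ℕ → ℕ) (L K : ℕ → ℕ)
    (hl : IsPartitionOf l d) (hrestr : IsRestricted e l)
    (hL1 : L 1 = e)
    (hLdec : ∀ i, 1 ≤ i → i < s → L (i + 1) < L i)
    (hLpos : ∀ i, 1 ≤ i → i ≤ s → 1 ≤ L i)
    (hKpos : ∀ i, 1 ≤ i → i ≤ s → 1 ≤ K i)
    (hparts : ∀ i, 1 ≤ i → i ≤ s → ∀ rr, (∑ j ∈ Finset.Icc 1 (i - 1), K j) < rr →
      rr ≤ ∑ j ∈ Finset.Icc 1 i, K j → l rr = L i)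
    (hzero : ∀ rr, (∑ j ∈ Finset.Icc 1 s, K j) < rr → l rr = 0) :
    ∑ᶠ T ∈ LWTableaux e d l (cells l), LaurentPolynomial.T (degTab e (cells l) T) =
      ((LaurentPolynomial.T 1 + LaurentPolynomial.T (-1) : LaurentPolynomial ℤ)) ^ (K 1) := by
  exact main_statement e d s he hs l L K ⟨hl.1.1, hl.2.1, hl.2.2⟩ hrestr hL1 hLdec hLpos
    hKpos hparts hzero

end KN
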